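/- Suppose a directed graph G on vertex set σ has a partition σ = τ ∪ ω (disjoint, both nonempty) such that ω is simply-added onto τ, and τ has uniform in-degree d within G|_τ. Let W = W(G,ε,δ). Then every eigenvalue of I - W_τ other than its row-sum R_τ = |τ| + (|τ|-1-d)δ - dε is also an eigenvalue of I - W_σ. -/

import Mathlib

/-!
Work with left eigenvectors. Uniform in-degree makes every row sum of `I - W_τ` equal to `R_τ`,
so a left eigenvector `v` with eigenvalue `μ` satisfies `μ ∑ v = v (I - W_τ) 𝟙 = R_τ ∑ v`,
hence `∑ v = 0` when `μ ≠ R_τ`. Since `ω` is simply-added onto `τ`, each column of `I - W_σ`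
indexed by `ω` is constant on the rows indexed by `τ`, so it pairs to zero with `v`; thus `v`
extended by zero is a left eigenvector of `I - W_σ` with the same eigenvalue.
-/

open Matrix

namespace Matrix

variable {K ι : Type*} [Field K] [Fintype ι] [DecidableEq ι]

theorem mem_spectrum_iff_exists_vecMul_eq_smul {M : Matrix ι ι K} {μ : K} :
    μ ∈ spectrum K M ↔ ∃ v ≠ 0, v ᵥ* M = μ • v := by
  rw [spectrum.mem_iff, isUnit_iff_isUnit_det, isUnit_iff_ne_zero, not_not,
    ← exists_vecMul_eq_zero_iff]
  simp only [Algebra.algebraMap_eq_smul_one, vecMul_sub, vecMul_smul, vecMul_one, sub_eq_zero,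
    eq_comm]

omit [DecidableEq ι] in
theorem sum_eq_zero_of_vecMul_eq_smul {M : Matrix ι ι K} {R μ : K} (hrow : M *ᵥ 1 = R • 1)
    {v : ι → K} (hv : v ᵥ* M = μ • v) (hμR : μ ≠ R) : ∑ i, v i = 0 := by
  have h := dotProduct_mulVec v M 1
  rw [hrow, hv, dotProduct_smul, smul_dotProduct, dotProduct_one, smul_eq_mul, smul_eq_mul] at h
  by_contra hsum
  exact hμR (mul_right_cancel₀ hsum h).symm

theorem vecMul_extend_eq_smul_of_sum_eq_zero {M : Matrix ι ι K} {s : Finset ι}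
    (hcol : ∀ j ∉ s, ∃ c, ∀ i ∈ s, M i j = c) {v : s → K} {μ : K}
    (hv : v ᵥ* M.submatrix (↑) (↑) = μ • v) (hsum : ∑ i, v i = 0) :
    (fun i => if h : i ∈ s then v ⟨i, h⟩ else 0) ᵥ* M =
      μ • fun i => if h : i ∈ s then v ⟨i, h⟩ else 0 := by
  have hsupp (j : ι) :
      ∑ i, (if h : i ∈ s then v ⟨i, h⟩ else 0) * M i j = ∑ i : s, v i * M i j := by
    rw [← Finset.sum_subset s.subset_univ (fun i _ hi => by simp [hi]), ← Finset.sum_coe_sort s]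
    simp
  ext j
  rw [vecMul, dotProduct, hsupp]
  by_cases hj : j ∈ s
  · simpa [vecMul, dotProduct, hj] using congrFun hv ⟨j, hj⟩
  · obtain ⟨c, hc⟩ := hcol j hj
    rw [Finset.sum_congr rfl fun i _ => by rw [hc i i.2], ← Finset.sum_mul, hsum]
    simp [hj]

theorem mem_spectrum_of_mem_spectrum_submatrix {M : Matrix ι ι K} {s : Finset ι}
    (hcol : ∀ j ∉ s, ∃ c, ∀ i ∈ s, M i j = c) {R μ : K}
    (hrow : (M.submatrix Subtype.val Subtype.val : Matrix s s K) *ᵥ 1 = R • 1)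
    (hμ : μ ∈ spectrum K (M.submatrix Subtype.val Subtype.val : Matrix s s K))
    (hμR : μ ≠ R) :
    μ ∈ spectrum K M := by
  obtain ⟨v, hv0, hv⟩ := mem_spectrum_iff_exists_vecMul_eq_smul.mp hμ
  refine mem_spectrum_iff_exists_vecMul_eq_smul.mpr ⟨_, ?_,
    vecMul_extend_eq_smul_of_sum_eq_zero hcol hv (sum_eq_zero_of_vecMul_eq_smul hrow hv hμR)⟩
  obtain ⟨i, hi⟩ := Function.ne_iff.mp hv0
  exact Function.ne_iff.mpr ⟨i, by simpa using hi⟩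

end Matrix

/-- The matrix `I - W(G, ε, δ)` of the CTLN on the graph with edge relation `E`, where `E j i`
means `j → i`. -/
def ctlnMatrix {V R : Type*} [DecidableEq V] [Ring R] (E : V → V → Prop) [DecidableRel E]
    (ε δ : R) : Matrix V V R :=
  of fun i j => if i = j then 1 else if E j i then 1 - ε else 1 + δ

section ctlnMatrix

variable {V R : Type*} [DecidableEq V] [Ring R] (E : V → V → Prop) [DecidableRel E] (ε δ : R)

theorem ctlnMatrix_map {S : Type*} [Ring S] (f : R →+* S) :
    (ctlnMatrix E ε δ).map f = ctlnMatrix E (f ε) (f δ) := by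
  ext i j
  simp [ctlnMatrix, apply_ite f]

theorem ctlnMatrix_submatrix (s : Finset V) :
    (ctlnMatrix E ε δ).submatrix Subtype.val Subtype.val =
      ctlnMatrix (fun i j : s => E i j) ε δ := by
  ext i j
  simp [ctlnMatrix]

theorem exists_ctlnMatrix_col_eq_on {s : Finset V} {j : V} (hj : j ∉ s)
    (hsa : (∀ i ∈ s, E j i) ∨ ∀ i ∈ s, ¬ E j i) :
    ∃ c, ∀ i ∈ s, ctlnMatrix E ε δ i j = c := by
  have hne : ∀ i ∈ s, i ≠ j := fun i hi h => hj (h ▸ hi)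
  rcases hsa with hall | hnone
  · exact ⟨1 - ε, fun i hi => by simp [ctlnMatrix, hne i hi, hall i hi]⟩
  · exact ⟨1 + δ, fun i hi => by simp [ctlnMatrix, hne i hi, hnone i hi]⟩

theorem ctlnMatrix_mulVec_one [Fintype V] {d : ℕ} (hirr : ∀ i, ¬ E i i)
    (hdeg : ∀ i, Nat.card {j // E j i} = d) :
    ctlnMatrix E ε δ *ᵥ 1 =
      ((Fintype.card V : R) + (Fintype.card V - 1 - d) * δ - d * ε) • 1 := by
  ext i
  have hentry (j : V) : ctlnMatrix E ε δ i j =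
      (1 + δ) - (if i = j then δ else 0) - (if E j i then ε + δ else 0) := by
    by_cases hij : i = j
    · subst hij
      simp [ctlnMatrix, hirr]
    · by_cases hE : E j i <;> simp [ctlnMatrix, hij, hE]
  have hindeg : (Finset.univ.filter (E · i)).card = d := by
    rw [← Fintype.card_subtype, ← Nat.card_eq_fintype_card, hdeg]
  simp only [mulVec, dotProduct, Pi.one_apply, mul_one, hentry, Finset.sum_sub_distrib,
    Finset.sum_ite_eq, Finset.sum_const, Finset.mem_univ, if_true, Finset.card_univ, nsmul_eq_mul]
  rw [Finset.sum_ite, Finset.sum_const_zero, Finset.sum_const, add_zero, nsmul_eq_mul, hindeg]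
  simp only [Pi.smul_apply, Pi.one_apply, smul_eq_mul, mul_one]
  noncomm_ring

end ctlnMatrix

theorem stmt15_general (n : ℕ) (E : Fin n → Fin n → Prop) [DecidableRel E] (hirr : ∀ i, ¬ E i i)
    (t : Finset (Fin n))
    (hsa : ∀ i : Fin n, i ∉ t → ((∀ j ∈ t, E i j) ∨ (∀ j ∈ t, ¬ E i j)))
    (d : ℕ) (hud : ∀ i ∈ t, Nat.card {j : Fin n // j ∈ t ∧ E j i} = d)
    (ε δ : ℝ) :
    let Mσ : Matrix (Fin n) (Fin n) ℝ := Matrix.of fun i j =>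
      if i = j then 1 else if E j i then 1 - ε else 1 + δ
    let Mτ : Matrix {i // i ∈ t} {i // i ∈ t} ℝ := Matrix.of fun i j =>
      if i = j then 1 else if E j.val i.val then 1 - ε else 1 + δ
    let R : ℝ := (t.card : ℝ) + ((t.card : ℝ) - 1 - d) * δ - d * ε
    ∀ μ : ℂ, μ ∈ spectrum ℂ (Mτ.map Complex.ofReal) → μ ≠ (R : ℂ) →
      μ ∈ spectrum ℂ (Mσ.map Complex.ofReal) := by
  intro Mσ Mτ R μ hμ hμR
  have hσ : Mσ.map Complex.ofReal = ctlnMatrix E (ε : ℂ) δ :=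
    ctlnMatrix_map E ε δ Complex.ofRealHom
  have hτ : Mτ.map Complex.ofReal =
      (ctlnMatrix E (ε : ℂ) δ).submatrix Subtype.val Subtype.val := by
    rw [ctlnMatrix_submatrix]
    exact ctlnMatrix_map (fun i j : t => E i j) ε δ Complex.ofRealHom
  have hdeg (i : t) : Nat.card {j : t // E j i} = d := by
    rw [Nat.card_congr (Equiv.subtypeSubtypeEquivSubtypeInter (· ∈ t) (E · i))]
    exact hud i i.2
  rw [hσ]
  rw [hτ] at hμ
  refine Matrix.mem_spectrum_of_mem_spectrum_submatrix
    (fun j hj => exists_ctlnMatrix_col_eq_on E _ _ hj (hsa j hj)) ?_ hμ hμR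
  rw [ctlnMatrix_submatrix, ctlnMatrix_mulVec_one (fun i j : t => E i j) _ _ (fun i => hirr i) hdeg,
    Fintype.card_coe]
  simp [R]

theorem stmt15 (n : ℕ) (E : Fin n → Fin n → Prop) [DecidableRel E] (hirr : ∀ i, ¬ E i i)
    (t : Finset (Fin n)) (ht : t.Nonempty) (htc : t ≠ Finset.univ)
    (hsa : ∀ i : Fin n, i ∉ t → ((∀ j ∈ t, E i j) ∨ (∀ j ∈ t, ¬ E i j)))
    (d : ℕ) (hud : ∀ i ∈ t, Nat.card {j : Fin n // j ∈ t ∧ E j i} = d)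
    (ε δ : ℝ) (hε : 0 < ε) (hε1 : ε < 1) (hδ : 0 < δ) :
    let Mσ : Matrix (Fin n) (Fin n) ℝ := Matrix.of fun i j =>
      if i = j then 1 else if E j i then 1 - ε else 1 + δ
    let Mτ : Matrix {i // i ∈ t} {i // i ∈ t} ℝ := Matrix.of fun i j =>
      if i = j then 1 else if E j.val i.val then 1 - ε else 1 + δ
    let R : ℝ := (t.card : ℝ) + ((t.card : ℝ) - 1 - d) * δ - d * ε
    ∀ μ : ℂ, μ ∈ spectrum ℂ (Mτ.map Complex.ofReal) → μ ≠ (R : ℂ) →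
      μ ∈ spectrum ℂ (Mσ.map Complex.ofReal) :=
  stmt15_general n E hirr t hsa d hud ε δ
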